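/- arXiv:1502.02966 — 7 statements merged into one kernel-verified Lean document; each statement's English description precedes it below -/
import Mathlib

section
/- Let T be a partition of n and a ∈ ℕ. Then T^a = T if and only if gcd(a, lcm of the terms of T) = 1. -/
def partitionPow (T : Multiset ℕ) (a : ℕ) : Multiset ℕ :=
  T.bind fun m => Multiset.replicate (Nat.gcd a m) (m / Nat.gcd a m)

theorem stmt_7 (n : ℕ) (T : Multiset ℕ) (hsum : T.sum = n)
    (hpos : ∀ m ∈ T, 1 ≤ m) (a : ℕ) :
    partitionPow T a = T ↔ Nat.gcd a T.lcm = 1 := by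
  constructor
  · intro h
    have hcard : (T.map fun m => Nat.gcd a m).sum = T.card := by
      have := congrArg Multiset.card h
      simpa [partitionPow, Multiset.card_bind, Function.comp] using this
    have hone : ∀ m ∈ T, Nat.gcd a m = 1 := by
      by_contra hc
      push_neg at hc
      obtain ⟨m, hm, hne⟩ := hc
      have hge : 2 ≤ Nat.gcd a m := by
        have h1 := hpos m hm
        have : Nat.gcd a m ≠ 0 := fun h0 => by
          have := Nat.eq_zero_of_gcd_eq_zero_right h0; omega
        omega
      have hlt : ((T.map fun _ => 1).sum : ℕ) < (T.map fun m => Nat.gcd a m).sum := by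
        apply Multiset.sum_lt_sum
        · intro i hi
          have h1 := hpos i hi
          have : Nat.gcd a i ≠ 0 := fun h0 => by
            have := Nat.eq_zero_of_gcd_eq_zero_right h0; omega
          omega
        · exact ⟨m, hm, by omega⟩
      simp [hcard] at hlt
    clear hcard h hsum
    induction T using Multiset.induction with
    | empty => simp
    | cons x s ih =>
      rw [Multiset.lcm_cons]
      have hx : Nat.Coprime a x := hone x (Multiset.mem_cons_self x s)
      have hs : Nat.Coprime a s.lcm :=
        ih (fun m hm => hpos m (Multiset.mem_cons_of_mem hm))
          (fun m hm => hone m (Multiset.mem_cons_of_mem hm))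
      exact Nat.Coprime.coprime_dvd_right (Nat.lcm_dvd_mul x s.lcm) (hx.mul_right hs)
  · intro h
    have hco : ∀ m ∈ T, Nat.gcd a m = 1 := fun m hm =>
      Nat.eq_one_of_dvd_one (h ▸ Nat.dvd_gcd (Nat.gcd_dvd_left a m)
        ((Nat.gcd_dvd_right a m).trans (Multiset.dvd_lcm hm)))
    calc partitionPow T a = T.bind fun m => {m} := by
          apply Multiset.bind_congr
          intro m hm
          simp [hco m hm]
      _ = T := by rw [Multiset.bind_singleton, Multiset.map_id']
end

section
/- Let T be a partition of n and a ∈ ℕ. Then T^a equals the trivial partition [1^n] if and only if o(T) divides a, where o(T) is the lcm of the terms of T. -/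
theorem stmt_8 (n : ℕ) (T : Multiset ℕ) (hsum : T.sum = n)
    (hpos : ∀ m ∈ T, 1 ≤ m) (a : ℕ) :
    partitionPow T a = Multiset.replicate n 1 ↔ T.lcm ∣ a := by
  constructor
  · intro h
    apply Multiset.lcm_dvd.2
    intro m hm
    have hm1 : 1 ≤ m := hpos m hm
    have hg : 0 < Nat.gcd a m := Nat.gcd_pos_of_pos_right a hm1
    have hmem : m / Nat.gcd a m ∈ partitionPow T a := by
      simp only [partitionPow, Multiset.mem_bind]
      exact ⟨m, hm, Multiset.mem_replicate.2 ⟨hg.ne', rfl⟩⟩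
    rw [Multiset.eq_replicate] at h
    have := h.2 _ hmem
    have hdvd : Nat.gcd a m ∣ m := Nat.gcd_dvd_right a m
    have : m = Nat.gcd a m := by
      have := Nat.div_eq_iff_eq_mul_left hg hdvd |>.1 this
      omega
    rw [this] at *
    exact Nat.gcd_dvd_left a _
  · intro h
    have hall : ∀ m ∈ T, Nat.gcd a m = m := fun m hm =>
      Nat.gcd_eq_right ((Multiset.dvd_lcm hm).trans h)
    rw [Multiset.eq_replicate]
    constructor
    · simp only [partitionPow, Multiset.card_bind, Multiset.card_replicate]
      rw [← hsum]
      apply congrArg Multiset.sum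
      conv_rhs => rw [← Multiset.map_id' T]
      refine Multiset.map_congr rfl fun m hm => ?_
      simp [hall m hm]
    · intro x hx
      simp only [partitionPow, Multiset.mem_bind] at hx
      obtain ⟨m, hm, hx⟩ := hx
      have := (Multiset.mem_replicate.1 hx).2
      rw [hall m hm, Nat.div_self (hpos m hm)] at this
      exact this
end

section
/- Let T be a partition of n and a ∈ ℕ such that T^a is a proper power of T (i.e., T^a ≠ T and T^a ≠ [1^n]). Then o(T^a) is a proper divisor of o(T) (i.e., o(T^a) divides o(T) and o(T^a) ∉ {1, o(T)}). -/
theorem Nat.lcm_div_left_eq_div_gcd (a m : ℕ) (ha : a ≠ 0) : lcm a m / a = m / gcd a m := by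
  rw [Nat.lcm, Nat.mul_div_assoc _ (Nat.gcd_dvd_right a m),
    Nat.mul_div_cancel_left _ (Nat.pos_of_ne_zero ha)]

theorem Nat.div_gcd_dvd_div_gcd_of_dvd (a : ℕ) {m L : ℕ} (h : m ∣ L) :
    m / gcd a m ∣ L / gcd a L := by
  rcases eq_or_ne a 0 with rfl | ha
  · rcases eq_or_ne L 0 with rfl | hL
    · simp
    · have hm : 0 < m := Nat.pos_of_dvd_of_pos h (Nat.pos_of_ne_zero hL)
      simp [Nat.div_self hm, Nat.div_self (Nat.pos_of_ne_zero hL)]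
  · rw [← Nat.lcm_div_left_eq_div_gcd a m ha, ← Nat.lcm_div_left_eq_div_gcd a L ha]
    exact Nat.div_dvd_div (Nat.dvd_lcm_left a m)
      (Nat.lcm_dvd (Nat.dvd_lcm_left a L) (h.trans (Nat.dvd_lcm_right a L)))

theorem mem_partitionPow {T : Multiset ℕ} {a b : ℕ} :
    b ∈ partitionPow T a ↔ ∃ m ∈ T, Nat.gcd a m ≠ 0 ∧ m / Nat.gcd a m = b := by
  simp only [partitionPow, Multiset.mem_bind, Multiset.mem_replicate, eq_comm (a := b)]

theorem partitionPow_eq_self_of_coprime {T : Multiset ℕ} {a : ℕ}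
    (h : ∀ m ∈ T, Nat.Coprime a m) : partitionPow T a = T :=
  calc partitionPow T a = T.bind fun m => {m} :=
        Multiset.bind_congr fun m hm => by simp [(h m hm).gcd_eq_one]
    _ = T := by simpa using Multiset.bind_singleton T id

theorem partitionPow_eq_replicate_of_dvd {T : Multiset ℕ} {a : ℕ}
    (h : ∀ m ∈ T, m ∣ a) : partitionPow T a = Multiset.replicate T.sum 1 := by
  induction T using Multiset.induction with
  | empty => rfl
  | cons m T ih =>
    have hm : Nat.gcd a m = m := Nat.gcd_eq_right (h m (Multiset.mem_cons_self m T))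
    rw [partitionPow, Multiset.cons_bind, ← partitionPow,
      ih fun k hk => h k (Multiset.mem_cons_of_mem hk), Multiset.sum_cons,
      Multiset.replicate_add, hm]
    rcases eq_or_ne m 0 with rfl | hm0
    · rfl
    · rw [Nat.div_self (Nat.pos_of_ne_zero hm0)]

theorem lcm_partitionPow_dvd_lcm_div_gcd (T : Multiset ℕ) (a : ℕ) :
    (partitionPow T a).lcm ∣ T.lcm / Nat.gcd a T.lcm :=
  Multiset.lcm_dvd.2 fun b hb => by
    obtain ⟨m, hm, -, rfl⟩ := mem_partitionPow.1 hb
    exact Nat.div_gcd_dvd_div_gcd_of_dvd a (Multiset.dvd_lcm hm)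

theorem stmt_9 (n : ℕ) (T : Multiset ℕ) (hsum : T.sum = n)
    (hpos : ∀ m ∈ T, 1 ≤ m) (a : ℕ)
    (hne : partitionPow T a ≠ T)
    (hnt : partitionPow T a ≠ Multiset.replicate n 1) :
    (partitionPow T a).lcm ∣ T.lcm ∧ (partitionPow T a).lcm ≠ 1 ∧
      (partitionPow T a).lcm ≠ T.lcm := by
  set L := T.lcm
  have hL : L ≠ 0 := fun h => by simpa using hpos 0 ((Multiset.lcm_eq_zero_iff T).1 h)
  have hdvd : (partitionPow T a).lcm ∣ L / Nat.gcd a L := lcm_partitionPow_dvd_lcm_div_gcd T a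
  have hdivL : L / Nat.gcd a L ∣ L := Nat.div_dvd_of_dvd (Nat.gcd_dvd_right a L)
  refine ⟨hdvd.trans hdivL, fun h1 => hnt ?_, fun hEq => hne ?_⟩
  · rw [← hsum]
    refine partitionPow_eq_replicate_of_dvd fun m hm => ?_
    have hg : Nat.gcd a m ≠ 0 := Nat.gcd_ne_zero_right (by have := hpos m hm; omega)
    have h : m / Nat.gcd a m = 1 :=
      Nat.dvd_one.1 <| h1 ▸ Multiset.dvd_lcm (mem_partitionPow.2 ⟨m, hm, hg, rfl⟩)
    rw [← Nat.eq_of_dvd_of_div_eq_one (Nat.gcd_dvd_right a m) h]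
    exact Nat.gcd_dvd_left a m
  · have hcop : Nat.Coprime a L :=
      (Nat.div_eq_self.1 (Nat.dvd_antisymm hdivL (hEq ▸ hdvd))).resolve_left hL
    exact partitionPow_eq_self_of_coprime fun m hm =>
      hcop.coprime_dvd_right (Multiset.dvd_lcm hm)
end

section
/- Let T be a partition of n, a ∈ ℕ, with T' = T^a a proper power of T. If a term x of T' appears with multiplicity exactly 1, then gcd(a, x) = 1 and x is a term of T appearing with multiplicity 1 in T. -/
theorem stmt_11 (n : ℕ) (T : Multiset ℕ) (hsum : T.sum = n)
    (hpos : ∀ m ∈ T, 1 ≤ m) (a : ℕ)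
    (hne : partitionPow T a ≠ T)
    (hnt : partitionPow T a ≠ Multiset.replicate n 1)
    (x : ℕ) (hx : (partitionPow T a).count x = 1) :
    Nat.gcd a x = 1 ∧ T.count x = 1 := by
  classical
  set f : ℕ → ℕ := fun m => if m / Nat.gcd a m = x then Nat.gcd a m else 0 with hf
  have hc : (T.map f).sum = 1 := by
    simpa [partitionPow, Multiset.count_bind, Multiset.count_replicate, hf] using hx
  -- there is a member of T.map f equal to 1
  have hex : ∃ y ∈ T.map f, y ≠ 0 := by
    by_contra h
    push_neg at h
    have : (T.map f).sum = 0 := Multiset.sum_eq_zero h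
    omega
  obtain ⟨y, hy, hy0⟩ := hex
  have hy1 : y ≤ 1 := hc ▸ Multiset.single_le_sum (fun _ _ => Nat.zero_le _) _ hy
  have hy1' : y = 1 := by omega
  obtain ⟨m, hmT, hfm⟩ := Multiset.mem_map.mp hy
  rw [hy1'] at hfm
  have hgcd : Nat.gcd a m = 1 ∧ x = m / Nat.gcd a m := by
    by_cases hxm : m / Nat.gcd a m = x
    · exact ⟨by simpa [hf, hxm] using hfm, hxm.symm⟩
    · simp [hf, hxm] at hfm
  have hmx : m = x := by
    rw [hgcd.2, hgcd.1, Nat.div_one]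
  subst hmx
  refine ⟨hgcd.1, ?_⟩
  have hge : 1 ≤ T.count m := Multiset.one_le_count_iff_mem.mpr hmT
  have hfxeq : f m = 1 := by simp [hf, hgcd.1]
  have hle : T.count m ≤ 1 := by
    by_contra h
    push_neg at h
    have h2 : Multiset.replicate 2 m ≤ T := Multiset.le_count_iff_replicate_le.mp (by omega)
    obtain ⟨u, hu⟩ := Multiset.le_iff_exists_add.mp h2
    have : (T.map f).sum = 2 + (u.map f).sum := by
      rw [hu]; simp [Multiset.map_replicate, hfxeq]; ring
    omega
  omega
end

section
/- Let 1 ≤ h < n/2. No partition of n has the partition [h, n−h] (two distinct parts h and n−h) as a proper power, and no partition of n has [n] (one part) as a proper power. -/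
lemma pow_card (T : Multiset ℕ) (a : ℕ) :
    (partitionPow T a).card = (T.map (Nat.gcd a)).sum := by
  simp [partitionPow, Multiset.card_bind, Function.comp]

lemma pow_eq_of_coprime (T : Multiset ℕ) (a : ℕ)
    (h : ∀ m ∈ T, Nat.gcd a m = 1) : partitionPow T a = T := by
  unfold partitionPow
  rw [Multiset.bind_congr (g := fun m => ({m} : Multiset ℕ))
    (fun m hm => by rw [h m hm]; simp), Multiset.bind_singleton]; exact Multiset.map_id T

lemma key (T : Multiset ℕ) (a : ℕ) (hpos : ∀ m ∈ T, 1 ≤ m)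
    (hne : partitionPow T a ≠ T) :
    ∃ m0 ∈ T, 2 ≤ Nat.gcd a m0 := by
  by_contra hc
  push_neg at hc
  apply hne
  apply pow_eq_of_coprime
  intro m hm
  have h1 := hpos m hm
  have h2 := hc m hm
  have : Nat.gcd a m ≠ 0 := by
    simp only [Ne, Nat.gcd_eq_zero_iff]
    omega
  omega

theorem stmt_12 (n h : ℕ) (h1 : 1 ≤ h) (h2 : 2 * h < n) :
    (¬ ∃ (T : Multiset ℕ) (a : ℕ), T.sum = n ∧ (∀ m ∈ T, 1 ≤ m) ∧
        partitionPow T a ≠ T ∧ partitionPow T a ≠ Multiset.replicate n 1 ∧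
        partitionPow T a = {h, n - h}) ∧
    (¬ ∃ (T : Multiset ℕ) (a : ℕ), T.sum = n ∧ (∀ m ∈ T, 1 ≤ m) ∧
        partitionPow T a ≠ T ∧ partitionPow T a ≠ Multiset.replicate n 1 ∧
        partitionPow T a = {n}) := by
  constructor
  · rintro ⟨T, a, hsum, hpos, hne, -, heq⟩
    obtain ⟨m0, hm0, hg0⟩ := key T a hpos hne
    have hcard : (T.map (Nat.gcd a)).sum = 2 := by
      rw [← pow_card, heq]; rfl
    -- extract m0
    obtain ⟨T', rfl⟩ := Multiset.exists_cons_of_mem hm0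
    rw [Multiset.map_cons, Multiset.sum_cons] at hcard
    have hT' : T' = 0 := by
      by_contra hT'
      obtain ⟨m1, hm1⟩ := Multiset.exists_mem_of_ne_zero hT'
      have hm1pos : 1 ≤ m1 := hpos m1 (Multiset.mem_cons_of_mem hm1)
      have hg1 : Nat.gcd a m1 ≠ 0 := by
        simp only [Ne, Nat.gcd_eq_zero_iff]; omega
      have : Nat.gcd a m1 ≤ (T'.map (Nat.gcd a)).sum :=
        Multiset.single_le_sum (fun x _ => Nat.zero_le x) _
          (Multiset.mem_map_of_mem _ hm1)
      omega
    subst hT'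
    have hg2 : Nat.gcd a m0 = 2 := by simp at hcard; omega
    have hm0n : m0 = n := by simpa using hsum
    have hpp : partitionPow (m0 ::ₘ 0) a = Multiset.replicate 2 (m0 / 2) := by
      simp [partitionPow, hg2]
    rw [hpp] at heq
    have hh : h = m0 / 2 := by
      have : h ∈ Multiset.replicate 2 (m0 / 2) := by rw [heq]; simp
      exact Multiset.eq_of_mem_replicate this
    have hdvd : 2 ∣ m0 := hg2 ▸ Nat.gcd_dvd_right a m0
    have := Nat.mul_div_cancel' hdvd
    omega
  · rintro ⟨T, a, hsum, hpos, hne, -, heq⟩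
    obtain ⟨m0, hm0, hg0⟩ := key T a hpos hne
    have hcard : (T.map (Nat.gcd a)).sum = 1 := by
      rw [← pow_card, heq]; rfl
    have : Nat.gcd a m0 ≤ (T.map (Nat.gcd a)).sum :=
      Multiset.single_le_sum (fun x _ => Nat.zero_le x) _
        (Multiset.mem_map_of_mem _ hm0)
    omega
end

section
/- For n ≥ 6, any two transpositions in S_n are connected by a path in the proper power graph of S_n (whose vertices are the nontrivial elements of S_n, with an edge between two elements when one is a power of the other). -/
/-!
If `x` and `y` commute and have coprime orders, each of them is a power of `x * y`, so
`x — x * y — y` is a path in the proper power graph. A transposition and a 3-cycle on disjoint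
supports are such a pair, and when at least six points are available, two transpositions
sharing a point admit a common disjoint 3-cycle. Any two transpositions `(a b)`, `(c d)` are
then joined through `(b c)`.
-/

/-- The proper power graph of a group: vertices are nontrivial elements,
with an edge when one is a power of the other. -/
def properPowerGraph (G : Type*) [Group G] :
    SimpleGraph {g : G // g ≠ 1} where
  Adj x y := x ≠ y ∧ ((∃ m : ℕ, (x : G) = (y : G) ^ m) ∨
    (∃ m : ℕ, (y : G) = (x : G) ^ m))
  symm := by
    constructor
    rintro x y ⟨hxy, h⟩
    exact ⟨hxy.symm, h.symm⟩
  loopless := by constructor; rintro x ⟨hx, -⟩; exact hx rfl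

open Equiv Finset

section Group

variable {G : Type*} [Group G]

theorem properPowerGraph_adj_of_eq_pow {x y : {g : G // g ≠ 1}} (hxy : x ≠ y) {m : ℕ}
    (h : (y : G) = (x : G) ^ m) : (properPowerGraph G).Adj x y :=
  ⟨hxy, Or.inr ⟨m, h⟩⟩

theorem Commute.exists_pow_mul_eq_left {x y : G} (hc : Commute x y)
    (hco : (orderOf x).Coprime (orderOf y)) : ∃ m : ℕ, (x * y) ^ m = x := by
  obtain ⟨m, hm⟩ := exists_pow_eq_self_of_coprime hco.symm
  exact ⟨orderOf y * m, by rw [pow_mul, hc.mul_pow, pow_orderOf_eq_one, mul_one, hm]⟩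

theorem properPowerGraph_reachable_of_commute {x y : G} (hx : x ≠ 1) (hy : y ≠ 1)
    (hc : Commute x y) (hco : (orderOf x).Coprime (orderOf y)) :
    (properPowerGraph G).Reachable ⟨x, hx⟩ ⟨y, hy⟩ := by
  have hxy : x * y ≠ 1 := by
    intro h
    have hord : orderOf y = orderOf x := by rw [← inv_eq_of_mul_eq_one_right h, orderOf_inv]
    rw [hord, Nat.coprime_self, orderOf_eq_one_iff] at hco
    exact hx hco
  obtain ⟨m, hm⟩ := hc.exists_pow_mul_eq_left hco
  obtain ⟨k, hk⟩ := hc.symm.exists_pow_mul_eq_left hco.symm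
  rw [← hc.eq] at hk
  have hadj_x : (properPowerGraph G).Adj ⟨x * y, hxy⟩ ⟨x, hx⟩ :=
    properPowerGraph_adj_of_eq_pow (fun h => hy (mul_eq_left.mp (congrArg Subtype.val h))) hm.symm
  have hadj_y : (properPowerGraph G).Adj ⟨x * y, hxy⟩ ⟨y, hy⟩ :=
    properPowerGraph_adj_of_eq_pow (fun h => hx (mul_eq_right.mp (congrArg Subtype.val h))) hk.symm
  exact hadj_x.reachable.symm.trans hadj_y.reachable

end Group

section Perm

variable {α : Type*} [DecidableEq α] [Fintype α]

theorem Equiv.Perm.exists_isThreeCycle_support_eq {s : Finset α} (hs : #s = 3) :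
    ∃ g : Perm α, g.IsThreeCycle ∧ g.support = s := by
  obtain ⟨x, y, z, hxy, hxz, hyz, rfl⟩ := card_eq_three.mp hs
  have hsupp : (swap x y * swap y z).support = {x, y, z} :=
    Perm.support_swap_mul_swap (by simp [hxy, hxz, hyz])
  exact ⟨_, card_support_eq_three_iff.mp (hsupp ▸ hs), hsupp⟩

theorem properPowerGraph_reachable_swap_of_disjoint {a b : α} (hab : a ≠ b) {g : Perm α}
    (hg : g ≠ 1) (hodd : Odd (orderOf g)) (hd : Disjoint {a, b} g.support) :
    (properPowerGraph (Perm α)).Reachable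
      ⟨swap a b, mt swap_eq_one_iff.mp hab⟩ ⟨g, hg⟩ := by
  refine properPowerGraph_reachable_of_commute _ hg ?_ ?_
  · rw [← Perm.support_swap hab] at hd
    exact (Perm.disjoint_iff_disjoint_support.mpr hd).commute
  · rw [(show (swap a b).IsSwap from ⟨a, b, hab, rfl⟩).orderOf]
    exact Nat.coprime_two_left.mpr hodd

theorem properPowerGraph_reachable_swap_swap_of_common (hα : 6 ≤ Fintype.card α) {a b c : α}
    (hab : a ≠ b) (hbc : b ≠ c) :
    (properPowerGraph (Perm α)).Reachable
      ⟨swap a b, mt swap_eq_one_iff.mp hab⟩ ⟨swap b c, mt swap_eq_one_iff.mp hbc⟩ := by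
  have hcard : 3 ≤ #({a, b, c} : Finset α)ᶜ := by
    have := card_le_three (a := a) (b := b) (c := c)
    rw [card_compl]
    omega
  obtain ⟨t, ht, htcard⟩ := exists_subset_card_eq hcard
  obtain ⟨g, hg, rfl⟩ := Perm.exists_isThreeCycle_support_eq htcard
  have hodd : Odd (orderOf g) := by rw [hg.orderOf]; decide
  have hd : Disjoint ({a, b, c} : Finset α) g.support := disjoint_compl_right.mono_right ht
  exact (properPowerGraph_reachable_swap_of_disjoint hab hg.ne_one hodd
    (hd.mono_left (by simp [Finset.subset_iff]))).trans
    (properPowerGraph_reachable_swap_of_disjoint hbc hg.ne_one hodd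
      (hd.mono_left (by simp [Finset.subset_iff]))).symm

theorem properPowerGraph_reachable_swap_swap (hα : 6 ≤ Fintype.card α) {a b c d : α}
    (hab : a ≠ b) (hcd : c ≠ d) :
    (properPowerGraph (Perm α)).Reachable
      ⟨swap a b, mt swap_eq_one_iff.mp hab⟩ ⟨swap c d, mt swap_eq_one_iff.mp hcd⟩ := by
  rcases eq_or_ne b c with rfl | hbc
  · exact properPowerGraph_reachable_swap_swap_of_common hα hab hcd
  · exact (properPowerGraph_reachable_swap_swap_of_common hα hab hbc).trans
      (properPowerGraph_reachable_swap_swap_of_common hα hbc hcd)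

end Perm

theorem stmt_16 (n : ℕ) (hn : 6 ≤ n) (σ τ : Equiv.Perm (Fin n))
    (hσ : σ.IsSwap) (hτ : τ.IsSwap) (hσ1 : σ ≠ 1) (hτ1 : τ ≠ 1) :
    (properPowerGraph (Equiv.Perm (Fin n))).Reachable ⟨σ, hσ1⟩ ⟨τ, hτ1⟩ := by
  obtain ⟨a, b, hab, rfl⟩ := hσ
  obtain ⟨c, d, hcd, rfl⟩ := hτ
  exact properPowerGraph_reachable_swap_swap (by rwa [Fintype.card_fin]) hab hcd
end

section
/- For n ≥ 8, any two nontrivial permutations in S_n, neither of which has order equal to a prime p with p ≥ n−1, lie in the same connected component of the proper power graph of S_n. -/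
open Equiv Equiv.Perm Finset Multiset

theorem Commute.exists_mul_pow_eq_left {G : Type*} [Group G] {x y : G} (h : Commute x y)
    (hxy : (orderOf x).Coprime (orderOf y)) : ∃ m : ℕ, (x * y) ^ m = x := by
  obtain ⟨m, hmx, hmy⟩ := Nat.chineseRemainder hxy 1 0
  refine ⟨m, ?_⟩
  rw [h.mul_pow, pow_eq_pow_iff_modEq.mpr hmx, pow_eq_pow_iff_modEq.mpr hmy, pow_one, pow_zero,
    mul_one]

namespace Equiv.Perm

variable {α : Type*} [Fintype α] [DecidableEq α]

theorem exists_cycleType_eq_disjoint_support (m : Multiset ℕ) (s : Finset α)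
    (hm : m.sum + #s ≤ Fintype.card α) (h2 : ∀ a ∈ m, 2 ≤ a) :
    ∃ g : Perm α, g.cycleType = m ∧ _root_.Disjoint g.support s := by
  obtain ⟨g, hg⟩ := (exists_with_cycleType_iff (α := {a // a ∉ s})).mpr
    ⟨by rw [Fintype.card_subtype_compl, Fintype.card_coe]; omega, h2⟩
  refine ⟨ofSubtype g, by rw [cycleType_ofSubtype, hg], ?_⟩
  rw [support_ofSubtype, Finset.disjoint_left]
  intro a ha
  obtain ⟨b, -, rfl⟩ := Finset.mem_map.mp ha
  exact b.2

theorem orderOf_eq_of_cycleType_eq_replicate {σ : Perm α} {k p : ℕ}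
    (h : σ.cycleType = replicate k p) (hk : k ≠ 0) : orderOf σ = p := by
  rw [← lcm_cycleType, h]
  exact Nat.dvd_antisymm (Multiset.lcm_dvd.mpr fun a ha => (eq_of_mem_replicate ha).dvd)
    (Multiset.dvd_lcm (mem_replicate.mpr ⟨hk, rfl⟩))

theorem card_support_eq_of_cycleType_eq_replicate {σ : Perm α} {k p : ℕ}
    (h : σ.cycleType = replicate k p) : #σ.support = k * p := by
  rw [← sum_cycleType, h, sum_replicate, smul_eq_mul]

theorem IsCycle.cycleType_pow_eq_replicate {σ : Perm α} (hσ : σ.IsCycle) {j : ℕ}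
    (hj : (orderOf (σ ^ j)).Prime) :
    (σ ^ j).cycleType = replicate (#σ.support / orderOf (σ ^ j)) (orderOf (σ ^ j)) := by
  obtain ⟨k, hk⟩ := cycleType_prime_order hj
  have hsupp : (σ ^ j).support = σ.support := hσ.support_pow_eq_iff.mpr fun h =>
    hj.ne_one (orderOf_eq_one_iff.mpr (orderOf_dvd_iff_pow_eq_one.mp h))
  rw [hk, ← hsupp, card_support_eq_of_cycleType_eq_replicate hk, Nat.mul_div_cancel _ hj.pos]


theorem exists_prime_dvd_orderOf_add_two_le_card
    (h4 : 4 ≤ Fintype.card α) {σ : Perm α} (hσ1 : σ ≠ 1)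
    (hσ : ¬ ∃ p : ℕ, p.Prime ∧ Fintype.card α - 1 ≤ p ∧ orderOf σ = p) :
    ∃ r : ℕ, r.Prime ∧ r ∣ orderOf σ ∧ r + 2 ≤ Fintype.card α := by
  obtain ⟨l, hl⟩ := Multiset.exists_mem_of_ne_zero (mt cycleType_eq_zero.mp hσ1)
  have hlα : l ≤ Fintype.card α := (le_card_support_of_mem_cycleType hl).trans (card_le_univ _)
  have hl2 := two_le_of_mem_cycleType hl
  by_cases hlp : l.Prime
  · refine ⟨l, hlp, dvd_of_mem_cycleType hl, ?_⟩
    by_contra hlarge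
    have hσl : σ.cycleType = {l} := cycleType_of_card_le_mem_cycleType_add_two (by omega) hl
    exact hσ ⟨l, hlp, by omega, by
      rw [← lcm_cycleType, hσl, Multiset.lcm_singleton, normalize_eq]⟩
  · have hr := Nat.minFac_prime (show l ≠ 1 by omega)
    refine ⟨l.minFac, hr, (Nat.minFac_dvd l).trans (dvd_of_mem_cycleType hl), ?_⟩
    nlinarith [Nat.minFac_sq_le_self (by omega) hlp, hr.two_le]

end Equiv.Perm

namespace properPowerGraph

section Group

variable {G H : Type*} [Group G] [Group H]

def map (f : G →* H) (hf : Function.Injective f) :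
    properPowerGraph G →g properPowerGraph H where
  toFun x := ⟨f x, (map_ne_one_iff f hf).mpr x.2⟩
  map_rel' := by
    rintro x y ⟨hne, h⟩
    refine ⟨fun e => hne (Subtype.ext (hf (congrArg Subtype.val e))), ?_⟩
    rcases h with ⟨m, hm⟩ | ⟨m, hm⟩
    · exact .inl ⟨m, by simp [hm]⟩
    · exact .inr ⟨m, by simp [hm]⟩

theorem reachable_of_eq_pow {x y : {g : G // g ≠ 1}} (m : ℕ) (h : (x : G) = (y : G) ^ m) :
    (properPowerGraph G).Reachable x y := by
  by_cases hxy : x = y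
  · exact hxy ▸ .refl _
  · exact SimpleGraph.Adj.reachable ⟨hxy, .inl ⟨m, h⟩⟩

theorem reachable_pow_pow (g : G) {a b : ℕ} (ha : g ^ a ≠ 1) (hb : g ^ b ≠ 1) :
    (properPowerGraph G).Reachable ⟨g ^ a, ha⟩ ⟨g ^ b, hb⟩ := by
  have hg : g ≠ 1 := by rintro rfl; simp at ha
  exact (reachable_of_eq_pow (y := ⟨g, hg⟩) a rfl).trans (reachable_of_eq_pow b rfl).symm

theorem reachable_of_commute_of_coprime {x y : {g : G // g ≠ 1}} (hc : Commute (x : G) y)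
    (hco : (orderOf (x : G)).Coprime (orderOf (y : G))) :
    (properPowerGraph G).Reachable x y := by
  obtain ⟨a, ha⟩ := hc.exists_mul_pow_eq_left hco
  obtain ⟨b, hb⟩ := hc.symm.exists_mul_pow_eq_left hco.symm
  rw [hc.symm.eq] at hb
  have hxy : (x : G) * y ≠ 1 := fun h => x.2 (by rw [← ha, h, one_pow])
  exact (reachable_of_eq_pow (y := ⟨_, hxy⟩) a ha.symm).trans (reachable_of_eq_pow b hb.symm).symm

end Group

section Perm

variable {α : Type*} [DecidableEq α]

def ReachesSwap (x : {g : Perm α // g ≠ 1}) : Prop :=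
  ∃ w : {g : Perm α // g ≠ 1}, (w : Perm α).IsSwap ∧ (properPowerGraph (Perm α)).Reachable x w

theorem ReachesSwap.of_reachable {x y : {g : Perm α // g ≠ 1}}
    (h : (properPowerGraph (Perm α)).Reachable x y) (hy : ReachesSwap y) : ReachesSwap x :=
  let ⟨w, hw, hyw⟩ := hy
  ⟨w, hw, h.trans hyw⟩

variable [Fintype α]

theorem ReachesSwap.of_cycleType_eq {x y : {g : Perm α // g ≠ 1}} (hx : ReachesSwap x)
    (h : (x : Perm α).cycleType = (y : Perm α).cycleType) : ReachesSwap y := by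
  obtain ⟨c, hc⟩ := isConj_iff.mp (isConj_of_cycleType_eq h)
  obtain ⟨w, hw, hxw⟩ := hx
  let φ := map (MulAut.conj c).toMonoidHom (MulEquiv.injective _)
  have hφx : φ x = y := Subtype.ext hc
  refine ⟨φ w, ?_, hφx ▸ hxw.map φ⟩
  rw [isSwap_iff_cycleType] at hw ⊢
  exact cycleType_conj.trans hw

theorem reachesSwap_of_cycleType_eq_replicate_of_odd {x : {g : Perm α // g ≠ 1}} {k p : ℕ}
    (hp : Odd p) (hx : (x : Perm α).cycleType = replicate k p)
    (hcard : k * p + 2 ≤ Fintype.card α) : ReachesSwap x := by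
  have hk : k ≠ 0 := by rintro rfl; exact x.2 (cycleType_eq_zero.mp hx)
  obtain ⟨t, ht, hdisj⟩ := exists_cycleType_eq_disjoint_support {2} (x : Perm α).support
    (by rw [card_support_eq_of_cycleType_eq_replicate hx]; simpa [add_comm] using hcard)
    (by simp)
  have hswap : t.IsSwap := isSwap_iff_cycleType.mpr ht
  refine ⟨⟨t, hswap.isCycle.ne_one⟩, hswap, reachable_of_commute_of_coprime
    (disjoint_iff_disjoint_support.mpr hdisj.symm).commute ?_⟩
  rw [orderOf_eq_of_cycleType_eq_replicate hx hk, hswap.orderOf]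
  exact Nat.coprime_two_right.mpr hp

theorem reachable_of_isSwap (h7 : 7 ≤ Fintype.card α) {x y : {g : Perm α // g ≠ 1}}
    (hx : (x : Perm α).IsSwap) (hy : (y : Perm α).IsSwap) :
    (properPowerGraph (Perm α)).Reachable x y := by
  obtain ⟨c, hc, hdisj⟩ := exists_cycleType_eq_disjoint_support {3}
    ((x : Perm α).support ∪ (y : Perm α).support)
    (by
      have := card_union_le (x : Perm α).support (y : Perm α).support
      rw [card_support_eq_two.mpr hx, card_support_eq_two.mpr hy] at this
      simp only [Multiset.sum_singleton]
      omega)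
    (by simp)
  have hc3 : c.IsThreeCycle := hc
  have reach : ∀ z : {g : Perm α // g ≠ 1}, (z : Perm α).IsSwap →
      _root_.Disjoint c.support (z : Perm α).support →
      (properPowerGraph (Perm α)).Reachable z ⟨c, hc3.ne_one⟩ := fun z hz hd =>
    reachable_of_commute_of_coprime (disjoint_iff_disjoint_support.mpr hd.symm).commute
      (by rw [hz.orderOf, hc3.orderOf]; norm_num)
  exact (reach x hx (hdisj.mono_right subset_union_left)).trans
    (reach y hy (hdisj.mono_right subset_union_right)).symm

theorem exists_reachable_cycleType_replicate {p q k : ℕ} (hp : p.Prime) (hq : q.Prime)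
    (hpq : p ≠ q) (hqk : q ≤ k) (hk : k * p ≤ Fintype.card α) :
    ∃ x w : {g : Perm α // g ≠ 1}, (x : Perm α).cycleType = replicate k p ∧
      (w : Perm α).cycleType = replicate p q ∧ (properPowerGraph (Perm α)).Reachable x w := by
  obtain ⟨E, hE, -⟩ := exists_cycleType_eq_disjoint_support {p * q} ∅
    (by
      rw [Multiset.sum_singleton, Finset.card_empty, add_zero]
      exact (Nat.mul_le_mul_left p hqk).trans (by rw [mul_comm]; exact hk))
    (by simpa using Nat.mul_le_mul hp.two_le hq.one_le)
  obtain ⟨R, hR, hER⟩ := exists_cycleType_eq_disjoint_support (replicate (k - q) p) E.support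
    (by
      rw [sum_replicate, smul_eq_mul, ← sum_cycleType, hE, Multiset.sum_singleton]
      calc (k - q) * p + p * q = k * p := by
            rw [mul_comm p q, ← add_mul, Nat.sub_add_cancel hqk]
        _ ≤ Fintype.card α := hk)
    (fun a ha => eq_of_mem_replicate ha ▸ hp.two_le)
  have hEcyc : E.IsCycle := card_cycleType_eq_one.mp (by simp [hE])
  have hEsupp : #E.support = p * q := by rw [← sum_cycleType, hE, Multiset.sum_singleton]
  have hEord : orderOf E = p * q := hEcyc.orderOf.trans hEsupp
  have hRp : R ^ p = 1 := by
    rw [← orderOf_dvd_iff_pow_eq_one, ← lcm_cycleType, hR]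
    exact Multiset.lcm_dvd.mpr fun a ha => (eq_of_mem_replicate ha).dvd
  -- `q * u ≡ 1 [MOD p]`: the power `q * u` fixes `R` and cuts `E` into `q` cycles of length `p`
  obtain ⟨u, -, hu⟩ := Nat.exists_mul_mod_eq_one_of_coprime
    ((Nat.coprime_primes hq hp).mpr hpq.symm) hp.one_lt
  have hRqu : R ^ (q * u) = R := by rw [pow_eq_pow_mod _ hRp, hu, pow_one]
  have hEq : orderOf (E ^ q) = p := by
    rw [orderOf_pow_of_dvd hq.ne_zero (hEord ▸ dvd_mul_left q p), hEord,
      Nat.mul_div_cancel _ hq.pos]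
  have hup : u.Coprime p :=
    Nat.coprime_of_mul_modEq_one q (by rw [Nat.ModEq, mul_comm, hu, Nat.mod_eq_of_lt hp.one_lt])
  have hEqu : orderOf (E ^ (q * u)) = p := by
    rw [pow_mul, Nat.Coprime.orderOf_pow (hEq ▸ hup.symm), hEq]
  have hEp : orderOf (E ^ p) = q := by
    rw [orderOf_pow_of_dvd hp.ne_zero (hEord ▸ dvd_mul_right p q), hEord,
      Nat.mul_div_cancel_left _ hp.pos]
  have hcomm : Commute E R := (disjoint_iff_disjoint_support.mpr hER.symm).commute
  have hEER : (E ^ (q * u)).Disjoint R :=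
    disjoint_iff_disjoint_support.mpr (hER.mono_right (support_pow_le E _)).symm
  have hMqu : ((E * R) ^ (q * u)).cycleType = replicate k p := by
    rw [hcomm.mul_pow, hRqu, hEER.cycleType_mul, hEcyc.cycleType_pow_eq_replicate (hEqu ▸ hp),
      hEqu, hR, hEsupp, Nat.mul_div_cancel_left _ hp.pos, ← replicate_add,
      Nat.add_sub_cancel' hqk]
  have hMp : ((E * R) ^ p).cycleType = replicate p q := by
    rw [hcomm.mul_pow, hRp, mul_one,
      hEcyc.cycleType_pow_eq_replicate (hEp ▸ hq), hEp, hEsupp, Nat.mul_div_cancel _ hq.pos]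
  have ne_one {g : Perm α} {m n : ℕ} (hm : m ≠ 0) (hg : g.cycleType = replicate m n) :
      g ≠ 1 := by
    rintro rfl
    exact hm (by simpa using congrArg Multiset.card hg.symm)
  exact ⟨_, _, hMqu, hMp, reachable_pow_pow _ (ne_one (hq.pos.trans_le hqk).ne' hMqu)
    (ne_one hp.ne_zero hMp)⟩

theorem reachesSwap_of_cycleType_eq_replicate_two (h8 : 8 ≤ Fintype.card α)
    {x : {g : Perm α // g ≠ 1}} {k : ℕ} (hx : (x : Perm α).cycleType = replicate k 2) :
    ReachesSwap x := by
  have hk : k ≠ 0 := by rintro rfl; exact x.2 (cycleType_eq_zero.mp hx)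
  have hsupp := card_support_eq_of_cycleType_eq_replicate hx
  have hkα := hsupp ▸ card_le_univ (x : Perm α).support
  by_cases hfix : k * 2 + 3 ≤ Fintype.card α
  · obtain ⟨c, hc, hdisj⟩ := exists_cycleType_eq_disjoint_support {3} (x : Perm α).support
      (by simp only [Multiset.sum_singleton]; omega) (by simp)
    have hc3 : c.IsThreeCycle := hc
    refine ReachesSwap.of_reachable (y := ⟨c, hc3.ne_one⟩)
      (reachable_of_commute_of_coprime (disjoint_iff_disjoint_support.mpr hdisj.symm).commute
        (by rw [orderOf_eq_of_cycleType_eq_replicate hx hk, hc3.orderOf]; norm_num))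
      (reachesSwap_of_cycleType_eq_replicate_of_odd (k := 1) (by decide) hc (by omega))
  · obtain ⟨y, w, hy, hw, hyw⟩ := exists_reachable_cycleType_replicate (α := α)
      Nat.prime_two Nat.prime_three (by decide) (by omega : 3 ≤ k) (by omega)
    have hwswap := reachesSwap_of_cycleType_eq_replicate_of_odd (by decide) hw (by omega)
    exact (hwswap.of_reachable hyw).of_cycleType_eq (hy.trans hx.symm)

theorem reachesSwap_of_cycleType_eq_replicate_of_prime (h8 : 8 ≤ Fintype.card α)
    {x : {g : Perm α // g ≠ 1}} {k p : ℕ} (hp : p.Prime) (hpα : p + 2 ≤ Fintype.card α)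
    (hx : (x : Perm α).cycleType = replicate k p) : ReachesSwap x := by
  rcases hp.eq_two_or_odd' with rfl | hodd
  · exact reachesSwap_of_cycleType_eq_replicate_two h8 hx
  have hk : k ≠ 0 := by rintro rfl; exact x.2 (cycleType_eq_zero.mp hx)
  by_cases hk1 : k = 1
  · subst hk1
    exact reachesSwap_of_cycleType_eq_replicate_of_odd hodd hx (by omega)
  · have hkα := card_support_eq_of_cycleType_eq_replicate hx ▸ card_le_univ (x : Perm α).support
    obtain ⟨y, w, hy, hw, hyw⟩ := exists_reachable_cycleType_replicate hp Nat.prime_two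
      (by rintro rfl; exact Nat.not_even_iff_odd.mpr hodd even_two) (by omega) hkα
    exact ((reachesSwap_of_cycleType_eq_replicate_two h8 hw).of_reachable hyw).of_cycleType_eq
      (hy.trans hx.symm)

theorem reachesSwap_of_not_orderOf_eq_large_prime (h8 : 8 ≤ Fintype.card α)
    (x : {g : Perm α // g ≠ 1})
    (hx : ¬ ∃ p : ℕ, p.Prime ∧ Fintype.card α - 1 ≤ p ∧ orderOf (x : Perm α) = p) :
    ReachesSwap x := by
  obtain ⟨r, hr, hrx, hrα⟩ := exists_prime_dvd_orderOf_add_two_le_card (by omega) x.2 hx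
  set z := (x : Perm α) ^ (orderOf (x : Perm α) / r)
  have hz : orderOf z = r := orderOf_pow_orderOf_div (orderOf_pos _).ne' hrx
  have hz1 : z ≠ 1 := fun h => hr.ne_one (by rw [← hz, h, orderOf_one])
  obtain ⟨k, hk⟩ := cycleType_prime_order (hz ▸ hr)
  exact ReachesSwap.of_reachable (reachable_of_eq_pow (x := ⟨z, hz1⟩) _ rfl).symm
    (reachesSwap_of_cycleType_eq_replicate_of_prime h8 hr hrα (hz ▸ hk))

end Perm

end properPowerGraph

theorem stmt_17 (n : ℕ) (hn : 8 ≤ n) (σ τ : Equiv.Perm (Fin n))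
    (hσ1 : σ ≠ 1) (hτ1 : τ ≠ 1)
    (hσ : ¬ ∃ p : ℕ, p.Prime ∧ n - 1 ≤ p ∧ orderOf σ = p)
    (hτ : ¬ ∃ p : ℕ, p.Prime ∧ n - 1 ≤ p ∧ orderOf τ = p) :
    (properPowerGraph (Equiv.Perm (Fin n))).Reachable ⟨σ, hσ1⟩ ⟨τ, hτ1⟩ := by
  have h8 : 8 ≤ Fintype.card (Fin n) := by simpa using hn
  obtain ⟨v, hv, hσv⟩ :=
    properPowerGraph.reachesSwap_of_not_orderOf_eq_large_prime h8 ⟨σ, hσ1⟩ (by simpa using hσ)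
  obtain ⟨w, hw, hτw⟩ :=
    properPowerGraph.reachesSwap_of_not_orderOf_eq_large_prime h8 ⟨τ, hτ1⟩ (by simpa using hτ)
  exact hσv.trans ((properPowerGraph.reachable_of_isSwap (by omega) hv hw).trans hτw.symm)
end
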